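/- For the Moran walk with h ≥ 1, let Pr(τ_h = n) := Pr(Y_n = h and Y_j < h for all 0 ≤ j < n) be the probability that the walk reaches altitude h for the first time at time n. Then in the formal power series ring ℝ[[z]] one has (1 − z + q p^{h} z^{h+1}) · Σ_{n≥0} Pr(τ_h = n) z^n = (1 − p z) · p^h z^h. -/

import Mathlib

/-- Altitude of the Moran walk after `j` steps: `true` means an up-step (+1),
`false` means a reset to altitude 0. -/
def moranY (ω : ℕ → Bool) : ℕ → ℕ
  | 0 => 0
  | j + 1 => if ω j then moranY ω j + 1 else 0

open Classical in
/-- Probability of the event `E` under the product measure on Moran walks of length `n`,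
where an up-step has weight `p` and a reset has weight `1 - p`. -/
noncomputable def moranPr (p : ℝ) (n : ℕ) (E : (ℕ → Bool) → Prop) : ℝ :=
  ∑ ω : Fin n → Bool,
    (∏ i, if ω i then p else 1 - p) *
      (if E (fun j => if h : j < n then ω ⟨j, h⟩ else false) then 1 else 0)

/-! Auxiliary development -/

/-- Extension of a finite walk by resets. -/
def moranExt (n : ℕ) (ω : Fin n → Bool) : ℕ → Bool :=
  fun j => if h : j < n then ω ⟨j, h⟩ else false

open Classical in
lemma moranPr_def (p : ℝ) (n : ℕ) (E : (ℕ → Bool) → Prop) :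
    moranPr p n E = ∑ ω : Fin n → Bool,
      (∏ i, if ω i then p else 1 - p) * (if E (moranExt n ω) then 1 else 0) := rfl

lemma moranY_congr {ω ω' : ℕ → Bool} {j : ℕ} (hj : ∀ i < j, ω i = ω' i) :
    moranY ω j = moranY ω' j := by
  induction j with
  | zero => rfl
  | succ j ih =>
    have h1 : ω j = ω' j := hj j (Nat.lt_succ_self j)
    have h2 : moranY ω j = moranY ω' j := ih fun i hi => hj i (hi.trans (Nat.lt_succ_self j))
    simp [moranY, h1, h2]

lemma moranY_le (ω : ℕ → Bool) (j : ℕ) : moranY ω j ≤ j := by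
  induction j with
  | zero => exact le_rfl
  | succ j ih =>
    by_cases h : ω j <;> simp [moranY, h] <;> omega

lemma moranY_succ_le (ω : ℕ → Bool) (j : ℕ) : moranY ω (j + 1) ≤ moranY ω j + 1 := by
  by_cases h : ω j <;> simp [moranY, h]

lemma moranExt_snoc_lt {n : ℕ} (ω : Fin n → Bool) (b : Bool) {i : ℕ} (hi : i < n) :
    moranExt (n + 1) (Fin.snoc ω b) i = moranExt n ω i := by
  simp only [moranExt, dif_pos hi, dif_pos (hi.trans (Nat.lt_succ_self n))]
  have : (⟨i, hi.trans (Nat.lt_succ_self n)⟩ : Fin (n + 1)) = Fin.castSucc ⟨i, hi⟩ := rfl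
  rw [this, Fin.snoc_castSucc]

lemma moranY_snoc {n : ℕ} (ω : Fin n → Bool) (b : Bool) {j : ℕ} (hj : j ≤ n) :
    moranY (moranExt (n + 1) (Fin.snoc ω b)) j = moranY (moranExt n ω) j :=
  moranY_congr fun i hi => moranExt_snoc_lt ω b (lt_of_lt_of_le hi hj)

lemma moranExt_snoc_last {n : ℕ} (ω : Fin n → Bool) (b : Bool) :
    moranExt (n + 1) (Fin.snoc ω b) n = b := by
  simp only [moranExt, dif_pos (Nat.lt_succ_self n)]
  have : (⟨n, Nat.lt_succ_self n⟩ : Fin (n + 1)) = Fin.last n := rfl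
  rw [this, Fin.snoc_last]

lemma moranY_snoc_top {n : ℕ} (ω : Fin n → Bool) (b : Bool) :
    moranY (moranExt (n + 1) (Fin.snoc ω b)) (n + 1)
      = if b then moranY (moranExt n ω) n + 1 else 0 := by
  show (if (moranExt (n + 1) (Fin.snoc ω b)) n then _ + 1 else 0) = _
  rw [moranExt_snoc_last, moranY_snoc ω b le_rfl]

lemma sum_split (n : ℕ) (F : (Fin (n + 1) → Bool) → ℝ) :
    ∑ ω, F ω = ∑ ω : Fin n → Bool, (F (Fin.snoc ω true) + F (Fin.snoc ω false)) := by
  rw [← Equiv.sum_comp (Fin.snocEquiv (fun _ => Bool)) F, Fintype.sum_prod_type,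
    Fintype.sum_bool]
  rw [← Finset.sum_add_distrib]
  rfl

open Classical in
lemma moranPr_step {p : ℝ} {n : ℕ} {E A B : (ℕ → Bool) → Prop}
    (hA : ∀ ω : Fin n → Bool, E (moranExt (n + 1) (Fin.snoc ω true)) ↔ A (moranExt n ω))
    (hB : ∀ ω : Fin n → Bool, E (moranExt (n + 1) (Fin.snoc ω false)) ↔ B (moranExt n ω)) :
    moranPr p (n + 1) E = p * moranPr p n A + (1 - p) * moranPr p n B := by
  rw [moranPr_def, moranPr_def, moranPr_def, sum_split, Finset.mul_sum, Finset.mul_sum,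
    ← Finset.sum_add_distrib]
  refine Finset.sum_congr rfl fun ω _ => ?_
  rw [Fin.prod_univ_castSucc, Fin.prod_univ_castSucc]
  simp only [Fin.snoc_castSucc, Fin.snoc_last]
  have e1 : (if E (moranExt (n + 1) (Fin.snoc ω true)) then (1:ℝ) else 0)
      = if A (moranExt n ω) then 1 else 0 := if_congr (hA ω) rfl rfl
  have e2 : (if E (moranExt (n + 1) (Fin.snoc ω false)) then (1:ℝ) else 0)
      = if B (moranExt n ω) then 1 else 0 := if_congr (hB ω) rfl rfl
  rw [e1, e2]
  simp only [if_pos, if_neg, Bool.false_eq_true, if_true, if_false]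
  ring

open Classical in
lemma moranPr_zero (p : ℝ) (E : (ℕ → Bool) → Prop) :
    moranPr p 0 E = if E (fun _ => false) then 1 else 0 := by
  rw [moranPr_def]
  have : moranExt 0 = fun _ (_ : ℕ) => false := by
    funext ω j; simp [moranExt]
  rw [this]
  simp

lemma moranPr_congr {p : ℝ} {n : ℕ} {E E' : (ℕ → Bool) → Prop}
    (h : ∀ ω, E ω ↔ E' ω) : moranPr p n E = moranPr p n E' := by
  classical
  rw [moranPr_def, moranPr_def]
  refine Finset.sum_congr rfl fun ω _ => ?_
  congr 1
  exact if_congr (h _) rfl rfl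

lemma moranPr_false (p : ℝ) (n : ℕ) : moranPr p n (fun _ => False) = 0 := by
  rw [moranPr_def]; simp

lemma moranPr_true (p : ℝ) (n : ℕ) : moranPr p n (fun _ => True) = 1 := by
  induction n with
  | zero => rw [moranPr_zero]; simp
  | succ n ih =>
    rw [moranPr_step (A := fun _ => True) (B := fun _ => True) (fun _ => Iff.rfl)
      (fun _ => Iff.rfl), ih]
    ring

open Classical in
lemma moranPr_diff {p : ℝ} {n : ℕ} {E E' : (ℕ → Bool) → Prop}
    (h : ∀ ω, E' ω → E ω) :
    moranPr p n E - moranPr p n E' = moranPr p n (fun ω => E ω ∧ ¬ E' ω) := by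
  rw [moranPr_def, moranPr_def, moranPr_def, ← Finset.sum_sub_distrib]
  refine Finset.sum_congr rfl fun ω _ => ?_
  rw [← mul_sub]
  congr 1
  by_cases h1 : E (moranExt n ω) <;> by_cases h2 : E' (moranExt n ω) <;>
    simp [h1, h2, h _ ]
  · exact absurd (h _ h2) h1

/-! The three fundamental sequences. -/

noncomputable def fP (p : ℝ) (h n : ℕ) : ℝ :=
  moranPr p n (fun ω => moranY ω n = h ∧ ∀ j < n, moranY ω j < h)

noncomputable def gP (p : ℝ) (h n : ℕ) : ℝ :=
  moranPr p n (fun ω => ∀ j ≤ n, moranY ω j < h)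

noncomputable def uP (p : ℝ) (h k n : ℕ) : ℝ :=
  moranPr p n (fun ω => moranY ω n = k ∧ ∀ j ≤ n, moranY ω j < h)

lemma fP_eq_zero {p : ℝ} {h n : ℕ} (hn : n < h) : fP p h n = 0 := by
  rw [fP, moranPr_congr (E' := fun _ => False), moranPr_false]
  intro ω
  simp only [iff_false]
  rintro ⟨h1, -⟩
  exact absurd (h1 ▸ moranY_le ω n) (by omega)

lemma uP_zero_zero {p : ℝ} {h : ℕ} (hh : 1 ≤ h) : uP p h 0 0 = 1 := by
  rw [uP, moranPr_zero, if_pos]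
  refine ⟨rfl, fun j hj => ?_⟩
  interval_cases j
  exact hh

lemma gP_zero {p : ℝ} {h : ℕ} (hh : 1 ≤ h) : gP p h 0 = 1 := by
  rw [gP, moranPr_zero, if_pos]
  intro j hj
  interval_cases j
  exact hh

lemma fP_succ {p : ℝ} {h n : ℕ} (hh : 1 ≤ h) :
    fP p h (n + 1) = p * uP p h (h - 1) n := by
  rw [fP, uP, moranPr_step (A := fun ω => moranY ω n = h - 1 ∧ ∀ j ≤ n, moranY ω j < h)
    (B := fun _ => False), moranPr_false, mul_zero, add_zero]
  · intro ω
    constructor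
    · rintro ⟨h1, h2⟩
      rw [moranY_snoc_top, if_pos rfl] at h1
      exact ⟨by omega, fun j hj => by
        rw [← moranY_snoc ω true hj]; exact h2 j (by omega)⟩
    · rintro ⟨h1, h2⟩
      refine ⟨?_, fun j hj => ?_⟩
      · rw [moranY_snoc_top, if_pos rfl]
        omega
      · have hj' : j ≤ n := by omega
        rw [moranY_snoc ω true hj']
        exact h2 j hj'
  · intro ω
    simp only [iff_false]
    rintro ⟨h1, -⟩
    rw [moranY_snoc_top, if_neg (by simp)] at h1
    omega

lemma uP_succ_pos {p : ℝ} {h k n : ℕ} (hk : k + 1 < h) :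
    uP p h (k + 1) (n + 1) = p * uP p h k n := by
  rw [uP, uP, moranPr_step (A := fun ω => moranY ω n = k ∧ ∀ j ≤ n, moranY ω j < h)
    (B := fun _ => False), moranPr_false, mul_zero, add_zero]
  · intro ω
    constructor
    · rintro ⟨h1, h2⟩
      rw [moranY_snoc_top, if_pos rfl] at h1
      exact ⟨by omega, fun j hj => by
        rw [← moranY_snoc ω true hj]; exact h2 j (by omega)⟩
    · rintro ⟨h1, h2⟩
      have htop : moranY (moranExt (n + 1) (Fin.snoc ω true)) (n + 1) = k + 1 := by
        rw [moranY_snoc_top, if_pos rfl, h1]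
      refine ⟨htop, fun j hj => ?_⟩
      rcases Nat.lt_succ_iff_lt_or_eq.mp (Nat.lt_succ_of_le hj) with hj' | hj'
      · by_cases hjn : j ≤ n
        · rw [moranY_snoc ω true hjn]; exact h2 j hjn
        · omega
      · rw [hj', htop]; exact hk
  · intro ω
    simp only [iff_false]
    rintro ⟨h1, -⟩
    rw [moranY_snoc_top, if_neg (by simp)] at h1
    omega

lemma uP_zero_succ {p : ℝ} {h n : ℕ} (hh : 1 ≤ h) :
    uP p h 0 (n + 1) = (1 - p) * gP p h n := by
  rw [uP, gP, moranPr_step (A := fun _ => False)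
    (B := fun ω => ∀ j ≤ n, moranY ω j < h), moranPr_false, mul_zero, zero_add]
  · intro ω
    simp only [iff_false]
    rintro ⟨h1, -⟩
    rw [moranY_snoc_top, if_pos rfl] at h1
    omega
  · intro ω
    constructor
    · rintro ⟨-, h2⟩ j hj
      rw [← moranY_snoc ω false hj]
      exact h2 j (by omega)
    · intro h2
      have htop : moranY (moranExt (n + 1) (Fin.snoc ω false)) (n + 1) = 0 := by
        rw [moranY_snoc_top, if_neg (by simp)]
      refine ⟨htop, fun j hj => ?_⟩
      rcases Nat.lt_succ_iff_lt_or_eq.mp (Nat.lt_succ_of_le hj) with hj' | hj'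
      · by_cases hjn : j ≤ n
        · rw [moranY_snoc ω false hjn]; exact h2 j hjn
        · omega
      · rw [hj', htop]; omega

lemma gP_pad (p : ℝ) (h n : ℕ) :
    gP p h n = moranPr p (n + 1) (fun ω => ∀ j ≤ n, moranY ω j < h) := by
  rw [moranPr_step (A := fun ω => ∀ j ≤ n, moranY ω j < h)
    (B := fun ω => ∀ j ≤ n, moranY ω j < h)]
  · rw [← gP]; ring
  · intro ω
    constructor
    · intro hx j hj; rw [← moranY_snoc ω true hj]; exact hx j hj
    · intro hx j hj; rw [moranY_snoc ω true hj]; exact hx j hj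
  · intro ω
    constructor
    · intro hx j hj; rw [← moranY_snoc ω false hj]; exact hx j hj
    · intro hx j hj; rw [moranY_snoc ω false hj]; exact hx j hj

lemma gP_diff {p : ℝ} {h n : ℕ} (hh : 1 ≤ h) :
    gP p h n - gP p h (n + 1) = fP p h (n + 1) := by
  rw [gP_pad, gP, fP]
  rw [moranPr_diff (E' := fun ω => ∀ j ≤ n + 1, moranY ω j < h)
    (fun ω hx j hj => hx j (by omega))]
  refine moranPr_congr fun ω => ?_
  constructor
  · rintro ⟨h1, h2⟩
    push_neg at h2
    obtain ⟨j, hj, hj2⟩ := h2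
    have hjn : j = n + 1 := by
      by_contra hc
      exact absurd (h1 j (by omega)) (by omega)
    subst hjn
    have hle : moranY ω (n + 1) ≤ moranY ω n + 1 := moranY_succ_le ω n
    have := h1 n le_rfl
    exact ⟨by omega, fun j hj => h1 j (by omega)⟩
  · rintro ⟨h1, h2⟩
    refine ⟨fun j hj => h2 j (by omega), fun hc => ?_⟩
    have := hc (n + 1) le_rfl
    omega

lemma uP_chain {p : ℝ} {h : ℕ} : ∀ k, k < h → ∀ n, uP p h k (n + k) = p ^ k * uP p h 0 n := by
  intro k
  induction k with
  | zero => intro _ n; simp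
  | succ k ih =>
    intro hk n
    rw [show n + (k + 1) = (n + k) + 1 from rfl, uP_succ_pos hk, ih (by omega) n,
      pow_succ]
    ring

lemma fP_high {p : ℝ} {h : ℕ} (hh : 1 ≤ h) (m : ℕ) :
    fP p h (m + h) = p ^ h * uP p h 0 m := by
  obtain ⟨h', rfl⟩ : ∃ h', h = h' + 1 := ⟨h - 1, by omega⟩
  rw [show m + (h' + 1) = (m + h') + 1 from rfl, fP_succ hh]
  simp only [Nat.add_sub_cancel]
  rw [uP_chain h' (by omega) m, pow_succ]
  ring

lemma fP_at_h {p : ℝ} {h : ℕ} (hh : 1 ≤ h) : fP p h h = p ^ h := by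
  have := fP_high (p := p) hh 0
  rw [zero_add, uP_zero_zero hh, mul_one] at this
  exact this

lemma fP_above_h {p : ℝ} {h : ℕ} (hh : 1 ≤ h) (m : ℕ) :
    fP p h (m + 1 + h) = p ^ h * ((1 - p) * gP p h m) := by
  rw [fP_high hh (m + 1), uP_zero_succ hh]

lemma coeff_key {p : ℝ} {h : ℕ} (hh : 1 ≤ h) (n : ℕ) :
    fP p h n - (if 1 ≤ n then fP p h (n - 1) else 0)
      + (1 - p) * p ^ h * (if h + 1 ≤ n then fP p h (n - (h + 1)) else 0)
    = (if n = h then p ^ h else 0) - (if n = h + 1 then p ^ (h + 1) else 0) := by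
  rcases lt_or_ge n h with hn | hn
  · have t1 : (if 1 ≤ n then fP p h (n - 1) else 0) = 0 := by
      split
      · exact fP_eq_zero (by omega)
      · rfl
    rw [fP_eq_zero hn, t1, if_neg (show ¬ h + 1 ≤ n by omega),
      if_neg (show n ≠ h by omega), if_neg (show n ≠ h + 1 by omega)]
    ring
  by_cases hn1 : n = h
  · subst hn1
    rw [fP_at_h hh, if_pos hh, fP_eq_zero (by omega), if_neg (by omega),
      if_pos rfl, if_neg (by omega)]
    ring
  by_cases hn2 : n = h + 1
  · subst hn2
    have e1 : fP p h (h + 1) = p ^ h * ((1 - p) * gP p h 0) := by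
      have := fP_above_h (p := p) hh 0
      rw [show 0 + 1 + h = h + 1 by omega] at this
      exact this
    rw [e1, gP_zero hh, if_pos (by omega), Nat.add_sub_cancel, fP_at_h hh,
      if_pos le_rfl, Nat.sub_self, fP_eq_zero (by omega),
      if_neg (by omega), if_pos rfl, pow_succ]
    ring
  · obtain ⟨m, rfl⟩ : ∃ m, n = m + 2 + h := ⟨n - 2 - h, by omega⟩
    have e1 : fP p h (m + 2 + h) = p ^ h * ((1 - p) * gP p h (m + 1)) := by
      have := fP_above_h (p := p) hh (m + 1)
      rw [show m + 1 + 1 + h = m + 2 + h by ring] at this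
      exact this
    have e2 : fP p h (m + 2 + h - 1) = p ^ h * ((1 - p) * gP p h m) := by
      rw [show m + 2 + h - 1 = m + 1 + h by omega]
      exact fP_above_h hh m
    have e3 : m + 2 + h - (h + 1) = m + 1 := by omega
    have e4 := gP_diff (p := p) (n := m) hh
    rw [e1, if_pos (by omega), e2, if_pos (by omega), e3,
      if_neg (by omega), if_neg (by omega)]
    linear_combination (-((1 - p) * p ^ h)) * e4

/-- For the Moran walk with `h ≥ 1`, the waiting time `τ_h`
(first hitting time of altitude `h`) satisfies, in `ℝ[[z]]`:
`(1 - z + q p^h z^{h+1}) Σ_{n≥0} Pr(τ_h = n) z^n = (1 - pz) p^h z^h`. -/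
theorem moranWalk_waitingTime_generatingFunction
    (p : ℝ) (hp0 : 0 < p) (hp1 : p < 1) (q : ℝ) (hq : q = 1 - p)
    (h : ℕ) (hh : 1 ≤ h) :
    (1 - PowerSeries.X + PowerSeries.C (q * p ^ h) * PowerSeries.X ^ (h + 1))
      * PowerSeries.mk (fun n =>
          moranPr p n (fun ω => moranY ω n = h ∧ ∀ j < n, moranY ω j < h))
    = (1 - PowerSeries.C p * PowerSeries.X)
        * PowerSeries.C (p ^ h) * PowerSeries.X ^ h := by
  subst hq
  have hmk : PowerSeries.mk (fun n =>
      moranPr p n (fun ω => moranY ω n = h ∧ ∀ j < n, moranY ω j < h))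
      = PowerSeries.mk (fP p h) := rfl
  rw [hmk]
  ext n
  have expand : (1 - PowerSeries.X + PowerSeries.C ((1 - p) * p ^ h)
        * PowerSeries.X ^ (h + 1)) * PowerSeries.mk (fP p h)
      = PowerSeries.mk (fP p h) - PowerSeries.X * PowerSeries.mk (fP p h)
        + PowerSeries.C ((1 - p) * p ^ h)
          * (PowerSeries.X ^ (h + 1) * PowerSeries.mk (fP p h)) := by
    ring
  have expand2 : (1 - PowerSeries.C p * PowerSeries.X)
        * PowerSeries.C (p ^ h) * PowerSeries.X ^ h
      = PowerSeries.C (p ^ h) * PowerSeries.X ^ h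
        - PowerSeries.C (p ^ (h + 1)) * PowerSeries.X ^ (h + 1) := by
    rw [pow_succ, pow_succ, map_mul]
    ring
  rw [expand, expand2]
  rw [map_sub, map_add, map_sub, PowerSeries.coeff_mk, PowerSeries.coeff_C_mul,
    PowerSeries.coeff_X_pow_mul', PowerSeries.coeff_C_mul_X_pow,
    PowerSeries.coeff_C_mul_X_pow, PowerSeries.coeff_mk]
  have hX : (PowerSeries.coeff n) (PowerSeries.X * PowerSeries.mk (fP p h))
      = if 1 ≤ n then fP p h (n - 1) else 0 := by
    cases n with
    | zero => simp [PowerSeries.coeff_zero_X_mul]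
    | succ n => simp [PowerSeries.coeff_succ_X_mul, PowerSeries.coeff_mk]
  rw [hX]
  have := coeff_key (p := p) hh n
  rw [show n - (h + 1) = n - h - 1 by omega] at this ⊢
  linarith [this]
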